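/- Let a > 0, c ≠ 0, σ ≤ μ, σ < −μ, μ ≠ 0, δ ∈ (0, |a/c|), and set û* = [ (D1/μ) ln(1 − (μ/σ) e^{μr}) − 1 ] δ. Then: (A) if r D1 − 1 > −μ/σ, the maximum of I2(û, δ) over û ∈ [−δ, −μδ/σ] is attained at û* when û* < −μδ/σ, and at −μδ/σ otherwise; (B) if r D1 − 1 > −μ/σ and û* < −μδ/σ, then I2(û*, δ) ≥ δ, and hence P(δ,c,2) ≥ δ. -/

import Mathlib

/-- The constant `D₁ = (|μ|+|σ|)(1 + (|μ|+|σ|)|c|δ)`. -/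
noncomputable def D1 (μ σ c δ : ℝ) : ℝ := (|μ| + |σ|) * (1 + (|μ| + |σ|) * |c| * δ)

/-- The constant `D₂ = (D₁² + (|μ|+|σ|)³|c|δ)(1 + |σc|δ)`. -/
noncomputable def D2 (μ σ c δ : ℝ) : ℝ :=
  ((D1 μ σ c δ) ^ 2 + (|μ| + |σ|) ^ 3 * |c| * δ) * (1 + |σ * c| * δ)

/-- The profile `η̄` used to define `η_{(3)}`. -/
noncomputable def etabar (δ d1 d2 s : ℝ) : ℝ :=
  if s ≤ 0 then -δ
  else if s < d1 / d2 then -δ + δ * d2 / 2 * s ^ 2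
  else -δ - δ * d1 ^ 2 / (2 * d2) + δ * d1 * s

/-- The shift `θ_shift` used to define `η_{(3)}`. -/
noncomputable def thetaShift (δ d1 d2 uh : ℝ) : ℝ :=
  if uh ≤ -δ + δ * d1 ^ 2 / (2 * d2) then Real.sqrt (2 * (uh + δ) / (d2 * δ))
  else (uh + δ + δ * d1 ^ 2 / (2 * d2)) / (d1 * δ)

/-- The extremal forcing functions `η_{(k)}` for `k = 1, 2, 3`. -/
noncomputable def etaK (μ σ c δ uh : ℝ) : ℕ → ℝ → ℝ
  | 1, θ => if θ < 0 then -δ else uh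
  | 2, θ => max (uh + D1 μ σ c δ * δ * θ) (-δ)
  | 3, θ => etabar δ (D1 μ σ c δ) (D2 μ σ c δ)
      (θ + thetaShift δ (D1 μ σ c δ) (D2 μ σ c δ) uh)
  | _, _ => 0

/-- `I(û, δ, ĉ, k) = û e^{μ(a+ĉδ)} + σ ∫_{-(a+ĉδ)}^{0} e^{-μθ} η_{(k)}(θ) dθ`
(the constants `D₁, D₂` in `η_{(k)}` are computed from `|c|`, while `ĉ` only enters
the integration limits). -/
noncomputable def Ifun (μ σ c a δ chat uh : ℝ) (k : ℕ) : ℝ :=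
  uh * Real.exp (μ * (a + chat * δ)) +
    σ * ∫ θ in (-(a + chat * δ))..(0 : ℝ), Real.exp (-μ * θ) * etaK μ σ c δ uh k θ

/-- `P(δ, c, k) = sup_{û ∈ [-δ, -μδ/σ]} I(û, δ, |c|, k)`. -/
noncomputable def Pfun (μ σ c a δ : ℝ) (k : ℕ) : ℝ :=
  sSup ((fun uh => Ifun μ σ c a δ |c| uh k) '' Set.Icc (-δ) (-μ * δ / σ))

/-- `r = a + |c|δ`. -/
noncomputable def rr (a c δ : ℝ) : ℝ := a + |c| * δ

/-- The explicit one-piece integral `I₁(û, δ)` (for `μ ≠ 0`). -/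
noncomputable def I1fun (μ σ c a δ uh : ℝ) : ℝ :=
  uh * (Real.exp (μ * rr a c δ) + σ / μ * (Real.exp (μ * rr a c δ) - 1)) +
    σ / μ * D1 μ σ c δ * δ *
      (1 / μ * (Real.exp (μ * rr a c δ) - 1) - rr a c δ * Real.exp (μ * rr a c δ))

/-- The explicit two-piece integral `I₂(û, δ)` (for `μ ≠ 0`). -/
noncomputable def I2fun (μ σ c a δ uh : ℝ) : ℝ :=
  uh * (Real.exp (μ * rr a c δ) - σ / μ) +
    σ / μ * δ * (D1 μ σ c δ / μ *
      (Real.exp (μ * (δ + uh) / (D1 μ σ c δ * δ)) - 1) - Real.exp (μ * rr a c δ))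

/-- The critical point `û* = [(D₁/μ) ln(1 - (μ/σ)e^{μr}) - 1] δ`. -/
noncomputable def ustar (μ σ c a δ : ℝ) : ℝ :=
  (D1 μ σ c δ / μ * Real.log (1 - μ / σ * Real.exp (μ * rr a c δ)) - 1) * δ

/-!
Where the linear piece of `η₍₂₎` is active, the integral `I` has the closed form `I₂`. The
function `I₂` is affine plus a negative multiple of an exponential, hence concave, with critical
point `û*` (where `e^{μ(δ+û)/(D₁δ)} = 1 - (μ/σ)e^{μr}`); expanding at `û*` gives (A).

For (B), the case `μ > 0` cannot occur: with `q = -μ/σ > 0` one has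
`log (1 + q e^{μr}) ≥ min (μr, q)`, which contradicts `û* < -μδ/σ` together with `rD₁ - 1 > q`.
For `μ < 0`, `I₂(û*)/δ` is an explicit expression in `P = μ/σ ∈ (0, 1]`, `A = D₁/|μ|` and
`L = log (1 - P e^{μr}) ≤ 0`; it is at least `1` because `PA ≥ 1 + P` (that is,
`D₁ ≥ |μ| + |σ|`), `e^L (1 - L) ≤ 1` and `-AL < 1 - P` (that is, `û* < -μδ/σ`).
-/

open Real

theorem integral_exp_neg_mul_mul_affine {μ : ℝ} (hμ : μ ≠ 0) (p q a b : ℝ) :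
    ∫ θ in a..b, exp (-μ * θ) * (p + q * θ) =
      exp (-μ * a) * ((p + q * a) / μ + q / μ ^ 2) -
        exp (-μ * b) * ((p + q * b) / μ + q / μ ^ 2) := by
  have hderiv (θ : ℝ) : HasDerivAt (fun θ => -(exp (-μ * θ) * ((p + q * θ) / μ + q / μ ^ 2)))
      (exp (-μ * θ) * (p + q * θ)) θ := by
    have hexp : HasDerivAt (fun θ => exp (-μ * θ)) (exp (-μ * θ) * -μ) θ := by
      simpa using ((hasDerivAt_id' θ).const_mul (-μ)).exp
    have haff : HasDerivAt (fun θ => (p + q * θ) / μ + q / μ ^ 2) (q / μ) θ := by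
      simpa using
        (((hasDerivAt_id' θ).const_mul q).const_add p).div_const μ |>.add_const (q / μ ^ 2)
    refine (hexp.mul haff).neg.congr_deriv ?_
    field_simp
    ring
  rw [intervalIntegral.integral_eq_sub_of_hasDerivAt (fun θ _ => hderiv θ)
    (by apply Continuous.intervalIntegrable; fun_prop)]
  ring

theorem integral_exp_neg_mul_mul_max_affine {μ k u δ r : ℝ} (hμ : μ ≠ 0) (hk : 0 < k)
    (hu : -δ ≤ u) (hur : δ + u ≤ k * r) :
    ∫ θ in (-r)..0, exp (-μ * θ) * max (u + k * θ) (-δ) =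
      k / μ ^ 2 * (exp (μ * (δ + u) / k) - 1) - u / μ - δ / μ * exp (μ * r) := by
  set θ₀ := -(δ + u) / k with hθ₀
  have hrθ₀ : -r ≤ θ₀ := by rw [hθ₀, le_div_iff₀ hk]; linarith
  have hθ₀0 : θ₀ ≤ 0 := div_nonpos_of_nonpos_of_nonneg (by linarith) hk.le
  have hkθ₀ : u + k * θ₀ = -δ := by rw [hθ₀]; field_simp; ring
  have hleft : ∫ θ in (-r)..θ₀, exp (-μ * θ) * max (u + k * θ) (-δ) =
      ∫ θ in (-r)..θ₀, exp (-μ * θ) * (-δ + 0 * θ) := by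
    refine intervalIntegral.integral_congr fun θ hθ => ?_
    rw [Set.uIcc_of_le hrθ₀] at hθ
    have : u + k * θ ≤ -δ := by nlinarith [hθ.2]
    simp only [max_eq_right this, zero_mul, add_zero]
  have hright : ∫ θ in θ₀..0, exp (-μ * θ) * max (u + k * θ) (-δ) =
      ∫ θ in θ₀..0, exp (-μ * θ) * (u + k * θ) := by
    refine intervalIntegral.integral_congr fun θ hθ => ?_
    rw [Set.uIcc_of_le hθ₀0] at hθ
    have : -δ ≤ u + k * θ := by nlinarith [hθ.1]
    simp only [max_eq_left this]
  have hcont : Continuous fun θ => exp (-μ * θ) * max (u + k * θ) (-δ) := by fun_prop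
  rw [← intervalIntegral.integral_add_adjacent_intervals (b := θ₀)
      (hcont.intervalIntegrable _ _) (hcont.intervalIntegrable _ _),
    hleft, hright, integral_exp_neg_mul_mul_affine hμ, integral_exp_neg_mul_mul_affine hμ, hkθ₀,
    show -μ * θ₀ = μ * (δ + u) / k by rw [hθ₀]; ring, mul_zero, exp_zero]
  field_simp
  ring

section

variable {μ σ c a δ : ℝ}

theorem abs_add_abs_le_D1 (hδ : 0 ≤ δ) : |μ| + |σ| ≤ D1 μ σ c δ :=
  le_mul_of_one_le_right (by positivity) (le_add_of_nonneg_right (by positivity))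

theorem D1_pos (hμ : μ ≠ 0) (hδ : 0 ≤ δ) : 0 < D1 μ σ c δ :=
  ((abs_pos.2 hμ).trans_le (le_add_of_nonneg_right (abs_nonneg σ))).trans_le
    (abs_add_abs_le_D1 hδ)

theorem Ifun_two_eq_I2fun {u : ℝ} (hμ : μ ≠ 0) (hδ : 0 < δ) (hu : -δ ≤ u)
    (hur : δ + u ≤ rr a c δ * D1 μ σ c δ * δ) :
    Ifun μ σ c a δ |c| u 2 = I2fun μ σ c a δ u := by
  have hk : 0 < D1 μ σ c δ * δ := mul_pos (D1_pos hμ hδ.le) hδ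
  have h := integral_exp_neg_mul_mul_max_affine (r := rr a c δ) hμ hk hu (by linarith)
  rw [Ifun, I2fun, ← rr]
  simp only [etaK]
  rw [h]
  field_simp
  ring

theorem antitoneOn_exp_mul_sub_mul (b : ℝ) :
    AntitoneOn (fun v => exp (b * v) - b * v) (Set.Iic 0) := by
  intro v _ w hw hvw
  have hexp : exp (b * w) * (1 + b * (v - w)) ≤ exp (b * v) := by
    rw [show b * v = b * w + b * (v - w) by ring, exp_add]
    exact mul_le_mul_of_nonneg_left (by linarith [add_one_le_exp (b * (v - w))]) (exp_pos _).le
  have hsign : 0 ≤ (exp (b * w) - 1) * b * (v - w) := by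
    rcases le_total b 0 with hb | hb
    · have : 1 ≤ exp (b * w) := one_le_exp (mul_nonneg_of_nonpos_of_nonpos hb hw)
      exact mul_nonneg_of_nonpos_of_nonpos (mul_nonpos_of_nonneg_of_nonpos (by linarith) hb)
        (by linarith)
    · have : exp (b * w) ≤ 1 := exp_le_one_iff.2 (mul_nonpos_of_nonneg_of_nonpos hb hw)
      exact mul_nonneg_of_nonpos_of_nonpos (mul_nonpos_of_nonpos_of_nonneg (by linarith) hb)
        (by linarith)
  show exp (b * w) - b * w ≤ exp (b * v) - b * v
  nlinarith

theorem I2fun_eq_I2fun_ustar_add (hμ : μ ≠ 0) (hσ : σ ≠ 0) (hδ : 0 < δ)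
    (hX : 0 < 1 - μ / σ * exp (μ * rr a c δ)) (u : ℝ) :
    I2fun μ σ c a δ u = I2fun μ σ c a δ (ustar μ σ c a δ) +
      σ * D1 μ σ c δ * δ * (1 - μ / σ * exp (μ * rr a c δ)) / μ ^ 2 *
        (exp (μ / (D1 μ σ c δ * δ) * (u - ustar μ σ c a δ)) - 1 -
          μ / (D1 μ σ c δ * δ) * (u - ustar μ σ c a δ)) := by
  have hD : D1 μ σ c δ ≠ 0 := (D1_pos hμ hδ.le).ne'
  have harg (v : ℝ) : μ * (δ + v) / (D1 μ σ c δ * δ) =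
      log (1 - μ / σ * exp (μ * rr a c δ)) + μ / (D1 μ σ c δ * δ) * (v - ustar μ σ c a δ) := by
    rw [ustar]
    field_simp
    ring
  rw [I2fun, I2fun, harg, harg, sub_self, mul_zero, add_zero, exp_add, exp_log hX]
  field_simp
  ring

theorem I2fun_le_I2fun_of_le (hμ : μ ≠ 0) (hσ : σ < 0) (hδ : 0 < δ)
    (hX : 0 < 1 - μ / σ * exp (μ * rr a c δ)) {u v : ℝ}
    (h : exp (μ / (D1 μ σ c δ * δ) * (v - ustar μ σ c a δ)) -
          μ / (D1 μ σ c δ * δ) * (v - ustar μ σ c a δ) ≤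
        exp (μ / (D1 μ σ c δ * δ) * (u - ustar μ σ c a δ)) -
          μ / (D1 μ σ c δ * δ) * (u - ustar μ σ c a δ)) :
    I2fun μ σ c a δ u ≤ I2fun μ σ c a δ v := by
  have hK : σ * D1 μ σ c δ * δ * (1 - μ / σ * exp (μ * rr a c δ)) / μ ^ 2 ≤ 0 :=
    div_nonpos_of_nonpos_of_nonneg (mul_nonpos_of_nonpos_of_nonneg (mul_nonpos_of_nonpos_of_nonneg
      (mul_nonpos_of_nonpos_of_nonneg hσ.le (D1_pos hμ hδ.le).le) hδ.le) hX.le) (sq_nonneg μ)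
  rw [I2fun_eq_I2fun_ustar_add hμ hσ.ne hδ hX u, I2fun_eq_I2fun_ustar_add hμ hσ.ne hδ hX v]
  nlinarith

theorem I2fun_le_I2fun_ustar (hμ : μ ≠ 0) (hσ : σ < 0) (hδ : 0 < δ)
    (hX : 0 < 1 - μ / σ * exp (μ * rr a c δ)) (u : ℝ) :
    I2fun μ σ c a δ u ≤ I2fun μ σ c a δ (ustar μ σ c a δ) :=
  I2fun_le_I2fun_of_le hμ hσ hδ hX (by
    rw [sub_self, mul_zero, exp_zero, sub_zero]
    linarith [add_one_le_exp (μ / (D1 μ σ c δ * δ) * (u - ustar μ σ c a δ))])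

theorem monotoneOn_I2fun (hμ : μ ≠ 0) (hσ : σ < 0) (hδ : 0 < δ)
    (hX : 0 < 1 - μ / σ * exp (μ * rr a c δ)) :
    MonotoneOn (I2fun μ σ c a δ) (Set.Iic (ustar μ σ c a δ)) := fun _ hu _ hv huv =>
  I2fun_le_I2fun_of_le hμ hσ hδ hX <| antitoneOn_exp_mul_sub_mul _
    (Set.mem_Iic.2 (sub_nonpos.2 hu)) (Set.mem_Iic.2 (sub_nonpos.2 hv)) (sub_le_sub_right huv _)

theorem one_sub_div_mul_exp_pos (hσ : σ < 0) (hσμ : σ ≤ μ) {r : ℝ} (hr : 0 < r) :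
    0 < 1 - μ / σ * exp (μ * r) := by
  rcases lt_or_ge μ 0 with hμ | hμ
  · have hP : μ / σ ≤ 1 := (div_le_one_of_neg hσ).2 hσμ
    have hE : exp (μ * r) < 1 := exp_lt_one_iff.2 (mul_neg_of_neg_of_pos hμ hr)
    nlinarith [div_pos_of_neg_of_neg hμ hσ, exp_pos (μ * r)]
  · nlinarith [div_nonpos_of_nonneg_of_nonpos hμ hσ.le, exp_pos (μ * r)]

theorem neg_le_ustar (hμ : μ ≠ 0) (hσ : σ < 0) (hδ : 0 < δ)
    (hX : 0 < 1 - μ / σ * exp (μ * rr a c δ)) : -δ ≤ ustar μ σ c a δ := by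
  have hD := D1_pos (σ := σ) (c := c) hμ hδ.le
  have hlog : 0 ≤ D1 μ σ c δ / μ * log (1 - μ / σ * exp (μ * rr a c δ)) := by
    rcases hμ.lt_or_gt with hμ | hμ
    · have : μ / σ * exp (μ * rr a c δ) ≥ 0 :=
        mul_nonneg (div_pos_of_neg_of_neg hμ hσ).le (exp_pos _).le
      exact mul_nonneg_of_nonpos_of_nonpos (div_nonpos_of_nonneg_of_nonpos hD.le hμ.le)
        (log_nonpos hX.le (by linarith))
    · have : μ / σ * exp (μ * rr a c δ) ≤ 0 :=
        mul_nonpos_of_nonpos_of_nonneg (div_nonpos_of_nonneg_of_nonpos hμ.le hσ.le) (exp_pos _).le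
      exact mul_nonneg (div_pos hD hμ).le (log_nonneg (by linarith))
  rw [ustar]
  nlinarith

theorem sq_le_of_neg_mul_lt_one_sub {P A L : ℝ} (hP : 0 < P) (hA : 1 + P ≤ P * A) (hL : L ≤ 0)
    (hT : -(A * L) < 1 - P) :
    P ^ 2 ≤ P * A * (1 - exp L * (1 - L)) + P * exp L - (1 - exp L) := by
  have hX1 : exp L ≤ 1 := exp_le_one_iff.2 hL
  have hXL : exp L * (1 - L) ≤ 1 := by
    have := mul_le_mul_of_nonneg_left (add_one_le_exp (-L)) (exp_pos L).le
    rwa [← exp_add, add_neg_cancel, exp_zero, neg_add_eq_sub] at this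
  have h1 : (1 + P) * (1 - exp L * (1 - L)) ≤ P * A * (1 - exp L * (1 - L)) :=
    mul_le_mul_of_nonneg_right hA (by linarith)
  have h2 : (1 + P) * -L * exp L ≤ (1 + P) * -L :=
    mul_le_of_le_one_right (by nlinarith) hX1
  have h3 : (1 + P) * -L ≤ P * A * -L := mul_le_mul_of_nonneg_right hA (by linarith)
  nlinarith

theorem I2fun_ustar_eq (hμ : μ ≠ 0) (hσ : σ ≠ 0) (hδ : 0 < δ)
    (hX : 0 < 1 - μ / σ * exp (μ * rr a c δ)) :
    I2fun μ σ c a δ (ustar μ σ c a δ) = δ / (μ / σ) ^ 2 *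
      (μ / σ * (-D1 μ σ c δ / μ) *
          (1 - (1 - μ / σ * exp (μ * rr a c δ)) * (1 - log (1 - μ / σ * exp (μ * rr a c δ)))) +
        μ / σ * (1 - μ / σ * exp (μ * rr a c δ)) - (1 - (1 - μ / σ * exp (μ * rr a c δ)))) := by
  have hD : D1 μ σ c δ ≠ 0 := (D1_pos hμ hδ.le).ne'
  have harg : μ * (δ + ustar μ σ c a δ) / (D1 μ σ c δ * δ) =
      log (1 - μ / σ * exp (μ * rr a c δ)) := by
    rw [ustar]
    field_simp
    ring
  rw [I2fun, harg, exp_log hX, ustar]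
  field_simp
  ring

theorem le_I2fun_ustar_of_neg (hμ : μ < 0) (hσμ : σ ≤ μ) (hδ : 0 < δ) (hr : 0 < rr a c δ)
    (hu : ustar μ σ c a δ < -μ * δ / σ) : δ ≤ I2fun μ σ c a δ (ustar μ σ c a δ) := by
  have hσ : σ < 0 := hσμ.trans_lt hμ
  have hX := one_sub_div_mul_exp_pos hσ hσμ hr
  have hP : 0 < μ / σ := div_pos_of_neg_of_neg hμ hσ
  have hA : 1 + μ / σ ≤ μ / σ * (-D1 μ σ c δ / μ) := by
    have hD := abs_add_abs_le_D1 (μ := μ) (σ := σ) (c := c) hδ.le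
    rw [abs_of_neg hμ, abs_of_neg hσ] at hD
    rw [show μ / σ * (-D1 μ σ c δ / μ) = D1 μ σ c δ / -σ by field_simp [hμ.ne],
      le_div_iff₀ (by linarith)]
    nlinarith [div_mul_cancel₀ μ hσ.ne]
  have hL : log (1 - μ / σ * exp (μ * rr a c δ)) ≤ 0 :=
    log_nonpos hX.le (by nlinarith [exp_pos (μ * rr a c δ)])
  have hT : -(-D1 μ σ c δ / μ * log (1 - μ / σ * exp (μ * rr a c δ))) < 1 - μ / σ := by
    rw [ustar, show -μ * δ / σ = -(μ / σ) * δ by ring] at hu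
    have := lt_of_mul_lt_mul_right hu hδ.le
    rw [neg_div, neg_mul, neg_neg]
    linarith
  have key := sq_le_of_neg_mul_lt_one_sub hP hA hL hT
  rw [exp_log hX] at key
  rw [I2fun_ustar_eq hμ.ne hσ.ne hδ hX, div_mul_eq_mul_div, le_div_iff₀ (by positivity)]
  exact mul_le_mul_of_nonneg_left key hδ.le

theorem min_le_log_one_add_mul_exp {q : ℝ} (hq : 0 ≤ q) (s : ℝ) :
    min s q ≤ log (1 + q * exp s) := by
  set m := min s q
  have hm : exp m * (1 - q) ≤ 1 := by
    have h1q : 1 - q ≤ exp (-m) := by linarith [min_le_right s q, add_one_le_exp (-m)]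
    have := mul_le_mul_of_nonneg_left h1q (exp_pos m).le
    rwa [← exp_add, add_neg_cancel, exp_zero] at this
  rw [le_log_iff_exp_le (by positivity)]
  nlinarith [mul_le_mul_of_nonneg_left (exp_le_exp.2 (min_le_left s q)) hq]

theorem neg_mul_div_le_ustar_of_pos (hμ : 0 < μ) (hσ : σ < 0) (hδ : 0 < δ)
    (hq : -μ / σ < rr a c δ * D1 μ σ c δ - 1) : -μ * δ / σ ≤ ustar μ σ c a δ := by
  have hD := abs_add_abs_le_D1 (μ := μ) (σ := σ) (c := c) hδ.le
  rw [abs_of_pos hμ, abs_of_neg hσ] at hD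
  have hq0 : 0 ≤ -μ / σ := div_nonneg_of_nonpos (by linarith) hσ.le
  have hlog := min_le_log_one_add_mul_exp hq0 (μ * rr a c δ)
  rw [show 1 + -μ / σ * exp (μ * rr a c δ) = 1 - μ / σ * exp (μ * rr a c δ) by ring] at hlog
  have hσq : -σ * (-μ / σ) = μ := by field_simp [hσ.ne]
  suffices μ * (1 + -μ / σ) ≤ D1 μ σ c δ * log (1 - μ / σ * exp (μ * rr a c δ)) by
    rw [ustar, show -μ * δ / σ = -μ / σ * δ by ring]
    refine mul_le_mul_of_nonneg_right ?_ hδ.le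
    rw [div_mul_eq_mul_div, le_sub_iff_add_le, le_div_iff₀ hμ]
    linarith
  rcases min_le_iff.1 hlog with hL | hL
  · nlinarith [mul_le_mul_of_nonneg_left hL (D1_pos (σ := σ) (c := c) hμ.ne' hδ.le).le]
  · nlinarith [mul_le_mul_of_nonneg_left hL (D1_pos (σ := σ) (c := c) hμ.ne' hδ.le).le]

theorem le_I2fun_ustar (hμ : μ ≠ 0) (hσ : σ < 0) (hσμ : σ ≤ μ) (hδ : 0 < δ)
    (hr : 0 < rr a c δ) (hq : -μ / σ < rr a c δ * D1 μ σ c δ - 1)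
    (hu : ustar μ σ c a δ < -μ * δ / σ) : δ ≤ I2fun μ σ c a δ (ustar μ σ c a δ) := by
  rcases hμ.lt_or_gt with hμ | hμ
  · exact le_I2fun_ustar_of_neg hμ hσμ hδ hr hu
  · exact absurd hu (neg_mul_div_le_ustar_of_pos hμ hσ hδ hq).not_gt

theorem Pfun_two_eq_I2fun_ustar (hμ : μ ≠ 0) (hσ : σ < 0) (hδ : 0 < δ)
    (hX : 0 < 1 - μ / σ * exp (μ * rr a c δ)) (hq : -μ / σ < rr a c δ * D1 μ σ c δ - 1)
    (hu : ustar μ σ c a δ < -μ * δ / σ) :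
    Pfun μ σ c a δ 2 = I2fun μ σ c a δ (ustar μ σ c a δ) := by
  have hEq : Set.EqOn (fun u => Ifun μ σ c a δ |c| u 2) (I2fun μ σ c a δ)
      (Set.Icc (-δ) (-μ * δ / σ)) := fun u hu =>
    Ifun_two_eq_I2fun hμ hδ hu.1 (by
      have := hu.2
      rw [show -μ * δ / σ = -μ / σ * δ by ring] at this
      nlinarith)
  have hmem : ustar μ σ c a δ ∈ Set.Icc (-δ) (-μ * δ / σ) := ⟨neg_le_ustar hμ hσ hδ hX, hu.le⟩
  rw [Pfun, hEq.image_eq]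
  exact IsGreatest.csSup_eq ⟨Set.mem_image_of_mem _ hmem,
    Set.forall_mem_image.2 fun u _ => I2fun_le_I2fun_ustar hμ hσ hδ hX u⟩

end

theorem stmt_16_general (μ σ c a δ : ℝ) (ha : 0 < a)
    (h1 : σ ≤ μ) (h2 : σ < -μ) (hμ : μ ≠ 0)
    (hδ0 : 0 < δ) :
    -- (A)
    (-μ / σ < rr a c δ * D1 μ σ c δ - 1 →
      ((ustar μ σ c a δ < -μ * δ / σ →
        ustar μ σ c a δ ∈ Set.Icc (-δ) (-μ * δ / σ) ∧
        ∀ uh ∈ Set.Icc (-δ) (-μ * δ / σ),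
          I2fun μ σ c a δ uh ≤ I2fun μ σ c a δ (ustar μ σ c a δ)) ∧
       (¬ ustar μ σ c a δ < -μ * δ / σ →
        ∀ uh ∈ Set.Icc (-δ) (-μ * δ / σ),
          I2fun μ σ c a δ uh ≤ I2fun μ σ c a δ (-μ * δ / σ)))) ∧
    -- (B)
    (-μ / σ < rr a c δ * D1 μ σ c δ - 1 → ustar μ σ c a δ < -μ * δ / σ →
      δ ≤ I2fun μ σ c a δ (ustar μ σ c a δ) ∧ δ ≤ Pfun μ σ c a δ 2) := by
  have hσ : σ < 0 := by linarith
  have hr : 0 < rr a c δ := by rw [rr]; positivity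
  have hX := one_sub_div_mul_exp_pos hσ h1 hr
  refine ⟨fun _ => ⟨fun hu => ⟨⟨neg_le_ustar hμ hσ hδ0 hX, hu.le⟩,
      fun u _ => I2fun_le_I2fun_ustar hμ hσ hδ0 hX u⟩, fun hu u hu' => ?_⟩, fun hq hu => ?_⟩
  · have hend : -μ * δ / σ ≤ ustar μ σ c a δ := not_lt.1 hu
    exact monotoneOn_I2fun hμ hσ hδ0 hX (hu'.2.trans hend) hend hu'.2
  · have hB := le_I2fun_ustar hμ hσ h1 hδ0 hr hq hu
    exact ⟨hB, hB.trans (Pfun_two_eq_I2fun_ustar hμ hσ hδ0 hX hq hu).ge⟩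

/-- Lemma B.2 (A),(B) of Humphries–Magpantay: location of the maximum
of `I₂` over `[-δ, -μδ/σ]` when `r D₁ - 1 > -μ/σ`, and the consequence `P(δ,c,2) ≥ δ`. -/
theorem stmt_16 (μ σ c a δ : ℝ) (ha : 0 < a) (hc : c ≠ 0)
    (h1 : σ ≤ μ) (h2 : σ < -μ) (hμ : μ ≠ 0)
    (hδ0 : 0 < δ) (hδ1 : δ < |a / c|) :
    -- (A)
    (-μ / σ < rr a c δ * D1 μ σ c δ - 1 →
      ((ustar μ σ c a δ < -μ * δ / σ →
        ustar μ σ c a δ ∈ Set.Icc (-δ) (-μ * δ / σ) ∧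
        ∀ uh ∈ Set.Icc (-δ) (-μ * δ / σ),
          I2fun μ σ c a δ uh ≤ I2fun μ σ c a δ (ustar μ σ c a δ)) ∧
       (¬ ustar μ σ c a δ < -μ * δ / σ →
        ∀ uh ∈ Set.Icc (-δ) (-μ * δ / σ),
          I2fun μ σ c a δ uh ≤ I2fun μ σ c a δ (-μ * δ / σ)))) ∧
    -- (B)
    (-μ / σ < rr a c δ * D1 μ σ c δ - 1 → ustar μ σ c a δ < -μ * δ / σ →
      δ ≤ I2fun μ σ c a δ (ustar μ σ c a δ) ∧ δ ≤ Pfun μ σ c a δ 2) :=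
  stmt_16_general μ σ c a δ ha h1 h2 hμ hδ0
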